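/- arXiv:1102.1812 — 5 statements merged into one kernel-verified Lean document; each statement's English description precedes it below -/
import Mathlib

section
/- For all real numbers a, b with 0 < a < 1 and 0 < b < 1, and any natural number n ≥ 1, (a·b^(n-1) + ∑_{i=0}^{n-2} b^i) / (a·b^(n-1) + ∑_{i=0}^{n-1} b^i) < (∑_{i=0}^{n-1} b^i) / (∑_{i=0}^{n} b^i); i.e., the parameter interval P_{LR^n} for the R-atomic orbit is nonempty. -/
theorem stmt_1 (a b : ℝ) (ha0 : 0 < a) (ha1 : a < 1) (hb0 : 0 < b) (hb1 : b < 1)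
    (n : ℕ) (hn : 1 ≤ n) :
    (a * b ^ (n - 1) + ∑ i ∈ Finset.range (n - 1), b ^ i) /
        (a * b ^ (n - 1) + ∑ i ∈ Finset.range n, b ^ i) <
      (∑ i ∈ Finset.range n, b ^ i) / (∑ i ∈ Finset.range (n + 1), b ^ i) := by
  obtain ⟨m, rfl⟩ := Nat.exists_eq_add_of_le hn
  simp only [Nat.add_comm 1 m, Nat.add_sub_cancel]
  set T : ℝ := ∑ i ∈ Finset.range m, b ^ i with hT
  have hTnn : 0 ≤ T := Finset.sum_nonneg fun i _ => (pow_pos hb0 i).le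
  have hS : ∑ i ∈ Finset.range (m + 1), b ^ i = T + b ^ m :=
    Finset.sum_range_succ _ _
  have hU : ∑ i ∈ Finset.range (m + 1 + 1), b ^ i = T + b ^ m + b ^ (m + 1) := by
    rw [Finset.sum_range_succ, hS]
  have hST : T + b ^ m = 1 + b * T := by
    have h1 := Finset.sum_range_succ' (fun i => b ^ i) m
    rw [Finset.sum_range_succ] at h1
    simp only [pow_succ, pow_zero, mul_comm] at h1 ⊢
    rw [hT, Finset.mul_sum]
    linarith
  have hbm : (0:ℝ) < b ^ m := pow_pos hb0 m
  have hab : a * b ^ (m + 1) < 1 := by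
    have h2 : b ^ (m + 1) < 1 := pow_lt_one₀ hb0.le hb1 m.succ_ne_zero
    nlinarith [mul_pos (sub_pos.mpr ha1) (pow_pos hb0 (m + 1))]
  rw [hS, hU]
  rw [div_lt_div_iff₀ (by positivity) (by positivity)]
  nlinarith [mul_pos hbm (sub_pos.mpr hab), mul_nonneg hTnn hbm.le, pow_succ b m]
end

section
/- For all real a, b with 0 < a < 1 and 0 < b < 1, and all n ≥ 2: a^n / ∑_{i=0}^{n} a^i < a^(n-1) / (a^(n-1)·b + ∑_{i=0}^{n-1} a^i) < a^(n-1) / ∑_{i=0}^{n-1} a^i < a^(n-2) / (a^(n-2)·b + ∑_{i=0}^{n-2} a^i). (The at-least and at-most thresholds for consecutive L's are interleaved so that at any parameter value only two successive block lengths can occur.) -/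
theorem stmt_7 (a b : ℝ) (ha0 : 0 < a) (ha1 : a < 1) (hb0 : 0 < b) (hb1 : b < 1)
    (n : ℕ) (hn : 2 ≤ n) :
    a ^ n / (∑ i ∈ Finset.range (n + 1), a ^ i) <
        a ^ (n - 1) / (a ^ (n - 1) * b + ∑ i ∈ Finset.range n, a ^ i) ∧
      a ^ (n - 1) / (a ^ (n - 1) * b + ∑ i ∈ Finset.range n, a ^ i) <
        a ^ (n - 1) / (∑ i ∈ Finset.range n, a ^ i) ∧
      a ^ (n - 1) / (∑ i ∈ Finset.range n, a ^ i) <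
        a ^ (n - 2) / (a ^ (n - 2) * b + ∑ i ∈ Finset.range (n - 1), a ^ i) := by
  obtain ⟨k, rfl⟩ := Nat.exists_eq_add_of_le hn
  have hpos : ∀ m : ℕ, 0 < ∑ i ∈ Finset.range (m + 1), a ^ i := fun m =>
    Finset.sum_pos (fun i _ => pow_pos ha0 i) (Finset.nonempty_range_add_one)
  have e1 : 2 + k - 1 = k + 1 := by omega
  have e2 : 2 + k - 2 = k := by omega
  have e3 : 2 + k = k + 2 := by omega
  rw [e1, e2, e3]
  set s1 := ∑ i ∈ Finset.range (k + 1), a ^ i with hs1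
  have hsum2 : ∑ i ∈ Finset.range (k + 2), a ^ i = s1 + a ^ (k + 1) :=
    Finset.sum_range_succ _ _
  have hsum3 : ∑ i ∈ Finset.range (k + 2 + 1), a ^ i = s1 + a ^ (k + 1) + a ^ (k + 2) := by
    rw [Finset.sum_range_succ, hsum2]
  have h1 : (0:ℝ) < s1 := hpos k
  have hp1 : (0:ℝ) < a ^ (k + 1) := pow_pos ha0 _
  have hp2 : (0:ℝ) < a ^ (k + 2) := pow_pos ha0 _
  have hpk : (0:ℝ) < a ^ k := pow_pos ha0 _
  have hap1 : a ^ (k + 1) = a ^ k * a := pow_succ a k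
  have hap2 : a ^ (k + 2) = a ^ (k + 1) * a := pow_succ a (k+1)
  rw [hsum2, hsum3]
  refine ⟨?_, ?_, ?_⟩
  · rw [div_lt_div_iff₀ (by linarith) (by positivity), hap2]
    have hab : a * b < 1 := by nlinarith
    have key : a * (a ^ (k + 1) * b) + a * s1 < s1 + a ^ (k + 1) := by
      nlinarith [mul_lt_mul_of_pos_left hab hp1, mul_pos (sub_pos.mpr ha1) h1]
    nlinarith [mul_lt_mul_of_pos_left key hp1]
  · apply div_lt_div_of_pos_left hp1 (by linarith)
    nlinarith [mul_pos hp1 hb0]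
  · rw [div_lt_div_iff₀ (by linarith) (by positivity)]
    nlinarith [mul_lt_mul_of_pos_left hb1 hp1, mul_lt_mul_of_pos_right ha1 (mul_pos hpk h1)]
end

section
/- Let 0 < a < 1, 0 < b < 1, n ≥ 1, and let μ satisfy a^n/∑_{i=0}^{n}a^i < μ ≤ a^(n-1)/(a^(n-1)b + ∑_{i=0}^{n-1}a^i). Define x₀ = (μ·(b·∑_{i=0}^{n-1}a^i + 1) − 1)/(1 − a^n·b). Then: x_k := a^k·x₀ + μ·∑_{i=0}^{k-1}a^i ≤ 0 for all 0 ≤ k ≤ n−1, x_n = a^n·x₀ + μ·∑_{i=0}^{n-1}a^i > 0, and b·x_n + μ − 1 = x₀. (Existence of the period-(n+1) atomic orbit L^n R for all μ in the stated interval.) -/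
set_option maxHeartbeats 1000000 in
theorem stmt_11 (a b μ : ℝ) (ha0 : 0 < a) (ha1 : a < 1) (hb0 : 0 < b) (hb1 : b < 1)
    (n : ℕ) (hn : 1 ≤ n)
    (hμ1 : a ^ n / (∑ i ∈ Finset.range (n + 1), a ^ i) < μ)
    (hμ2 : μ ≤ a ^ (n - 1) / (a ^ (n - 1) * b + ∑ i ∈ Finset.range n, a ^ i))
    (x₀ : ℝ)
    (hx₀ : x₀ = (μ * (b * (∑ i ∈ Finset.range n, a ^ i) + 1) - 1) / (1 - a ^ n * b)) :
    (∀ k : ℕ, k ≤ n - 1 → a ^ k * x₀ + μ * ∑ i ∈ Finset.range k, a ^ i ≤ 0) ∧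
      a ^ n * x₀ + μ * ∑ i ∈ Finset.range n, a ^ i > 0 ∧
      b * (a ^ n * x₀ + μ * ∑ i ∈ Finset.range n, a ^ i) + μ - 1 = x₀ := by
  obtain ⟨m, rfl⟩ : ∃ m, n = m + 1 := ⟨n - 1, (Nat.succ_pred_eq_of_pos hn).symm⟩
  simp only [Nat.add_sub_cancel] at *
  set s := ∑ i ∈ Finset.range m, a ^ i with hs
  have hs0 : 0 ≤ s := Finset.sum_nonneg fun i _ => by positivity
  have h1 : ∑ i ∈ Finset.range (m + 1), a ^ i = s + a ^ m := Finset.sum_range_succ _ _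
  have h2 : ∑ i ∈ Finset.range (m + 1), a ^ i = 1 + a * s := by
    rw [geom_sum_succ]; ring
  have hP : a ^ m = 1 - (1 - a) * s := by
    have := h1.symm.trans h2; linarith
  have hPpos : 0 < a ^ m := pow_pos ha0 m
  have hP1 : a ^ m ≤ 1 := pow_le_one₀ ha0.le ha1.le
  have hD : 0 < 1 - a ^ (m + 1) * b := by
    have h : a ^ (m + 1) ≤ 1 := pow_le_one₀ ha0.le ha1.le
    nlinarith
  have hDne : 1 - a ^ (m + 1) * b ≠ 0 := hD.ne'
  have hsum2 : 0 < ∑ i ∈ Finset.range (m + 1 + 1), a ^ i :=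
    Finset.sum_pos (fun i _ => pow_pos ha0 i) (by simp)
  have hμ0 : 0 < μ := lt_trans (div_pos (pow_pos ha0 _) hsum2) hμ1
  have hμ1' : a ^ (m + 1) < μ * ∑ i ∈ Finset.range (m + 1 + 1), a ^ i :=
    (div_lt_iff₀ hsum2).mp hμ1
  have hden : 0 < a ^ m * b + ∑ i ∈ Finset.range (m + 1), a ^ i := by
    have := Finset.sum_pos (fun i (_ : i ∈ Finset.range (m+1)) => pow_pos ha0 i) (by simp)
    nlinarith
  have hμ2' : μ * (a ^ m * b + (s + a ^ m)) ≤ a ^ m := by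
    have := (le_div_iff₀ hden).mp hμ2
    rwa [h1] at this
  have h3 : ∑ i ∈ Finset.range (m + 1 + 1), a ^ i = s + a ^ m + a * a ^ m := by
    rw [Finset.sum_range_succ, h1, pow_succ]; ring
  rw [h3] at hμ1'
  have hE : x₀ * (1 - a ^ (m + 1) * b) = μ * (b * (s + a ^ m) + 1) - 1 := by
    rw [hx₀, h1]; exact div_mul_cancel₀ _ hDne
  have hab1 : a * b * a ^ m ≤ 1 := by
    have h5 : a * b * a ^ m ≤ a * b := by nlinarith [mul_pos ha0 hb0, hP1]
    nlinarith [mul_pos ha0 hb0]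
  have hfin : μ * s * (a * b * a ^ m - 1) ≤ 0 :=
    mul_nonpos_of_nonneg_of_nonpos (mul_nonneg hμ0.le hs0) (by linarith)
  have hP' : s + a ^ m - 1 - a * s = 0 := by linarith
  have h4 : μ * (a ^ m * b) * (s + a ^ m - 1 - a * s) = 0 := by rw [hP', mul_zero]
  -- x_m ≤ 0
  have hxmD : (a ^ m * x₀ + μ * s) * (1 - a ^ (m + 1) * b)
      = μ * (a ^ m * b + (s + a ^ m)) - a ^ m := by
    linear_combination (a ^ m) * hE + (μ * a ^ m * b) * hP
  have hxm : a ^ m * x₀ + μ * s ≤ 0 := by nlinarith [hxmD, hμ2', hD]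
  -- x₀ ≤ 0
  have hN : μ * (b * (s + a ^ m) + 1) - 1 ≤ 0 := by
    have e : a ^ m * (μ * (b * (s + a ^ m) + 1) - 1)
        = μ * (a ^ m * b) * (s + a ^ m - 1 - a * s) + μ * s * (a * b * a ^ m - 1)
          + (μ * (a ^ m * b + (s + a ^ m)) - a ^ m) := by ring
    have e2 : a ^ m * (μ * (b * (s + a ^ m) + 1) - 1) ≤ 0 := by
      rw [e, hP']
      linarith [hfin, hμ2']
    nlinarith [e2, hPpos]
  have hx0 : x₀ ≤ 0 := by nlinarith [hE, hN, hD]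
  refine ⟨?_, ?_, ?_⟩
  · intro k hk
    have e1 : a ^ k * x₀ ≤ a ^ m * x₀ :=
      mul_le_mul_of_nonpos_right (pow_le_pow_of_le_one ha0.le ha1.le hk) hx0
    have e2 : μ * ∑ i ∈ Finset.range k, a ^ i ≤ μ * s :=
      mul_le_mul_of_nonneg_left
        (Finset.sum_le_sum_of_subset_of_nonneg (Finset.range_subset_range.2 hk)
          (fun i _ _ => by positivity)) hμ0.le
    linarith
  · rw [h1]
    have hxnD : (a ^ (m + 1) * x₀ + μ * (s + a ^ m)) * (1 - a ^ (m + 1) * b)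
        = μ * (s + a ^ m + a * a ^ m) - a ^ (m + 1) := by
      linear_combination (a ^ (m + 1)) * hE
    have : a ^ (m + 1) = a * a ^ m := by rw [pow_succ]; ring
    nlinarith [hxnD, hμ1', hD]
  · rw [h1]
    have key : (b * (a ^ (m + 1) * x₀ + μ * (s + a ^ m)) + μ - 1) * (1 - a ^ (m + 1) * b)
        = x₀ * (1 - a ^ (m + 1) * b) := by
      linear_combination (b * a ^ (m + 1) - 1) * hE
    exact mul_right_cancel₀ hDne key
end

section
/- Let 0 < a < 1 and 0 < b < 1, fix n ≥ 1, and set x_new = −μ·(∑_{i=0}^{n-2}a^i)/a^(n-1), ã = b·a^n, b̃ = b·a^(n-1), μ̃ = μ·b·∑_{i=0}^{n-1}a^i + μ − 1, l̃ = −μ·b·a^(n-1), μ̄ = μ̃ − x_new·(1−ã), l̄ = l̃ + x_new·(b̃−ã). Then the inequalities 0 < μ̄ and μ̄ < −l̄ hold if and only if a^(n-1)/(a^(n-1)b + ∑_{i=0}^{n-1}a^i) < μ < a^(n-1)/∑_{i=0}^{n-1}a^i. -/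
theorem stmt_12 (a b μ : ℝ) (ha0 : 0 < a) (ha1 : a < 1) (hb0 : 0 < b) (hb1 : b < 1)
    (n : ℕ) (hn : 1 ≤ n)
    (xnew atil btil μtil ltil μbar lbar : ℝ)
    (hxnew : xnew = -(μ * (∑ i ∈ Finset.range (n - 1), a ^ i)) / a ^ (n - 1))
    (hatil : atil = b * a ^ n)
    (hbtil : btil = b * a ^ (n - 1))
    (hμtil : μtil = μ * b * (∑ i ∈ Finset.range n, a ^ i) + μ - 1)
    (hltil : ltil = -(μ * b * a ^ (n - 1)))
    (hμbar : μbar = μtil - xnew * (1 - atil))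
    (hlbar : lbar = ltil + xnew * (btil - atil)) :
    (0 < μbar ∧ μbar < -lbar) ↔
      (a ^ (n - 1) / (a ^ (n - 1) * b + ∑ i ∈ Finset.range n, a ^ i) < μ ∧
        μ < a ^ (n - 1) / (∑ i ∈ Finset.range n, a ^ i)) := by
  obtain ⟨m, rfl⟩ : ∃ m, n = m + 1 := ⟨n - 1, (Nat.succ_pred_eq_of_pos hn).symm⟩
  simp only [Nat.add_sub_cancel] at *
  set S : ℝ := ∑ i ∈ Finset.range m, a ^ i with hS
  have hc : (0:ℝ) < a ^ m := pow_pos ha0 m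
  have hSnn : 0 ≤ S := Finset.sum_nonneg fun i _ => (pow_pos ha0 i).le
  have hgeom : S * (a - 1) = a ^ m - 1 := geom_sum_mul a m
  have hsum : (∑ i ∈ Finset.range (m + 1), a ^ i) = S + a ^ m := by
    rw [Finset.sum_range_succ]
  have hlbar' : lbar = -(μ * b) := by
    have h : lbar * a ^ m = -(μ * b) * a ^ m := by
      rw [hlbar, hltil, hbtil, hatil, hxnew]
      field_simp
      ring_nf
      linear_combination (μ * a ^ m) * hgeom
    exact mul_right_cancel₀ hc.ne' h
  have hμbar' : μbar * a ^ m = μ * (a ^ m * b + (S + a ^ m)) - a ^ m := by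
    rw [hμbar, hμtil, hatil, hxnew, hsum]
    field_simp
    ring_nf
    linear_combination (-(μ * b * a ^ m)) * hgeom
  rw [hsum, hlbar', neg_neg]
  have hd1 : (0:ℝ) < a ^ m * b + (S + a ^ m) := by positivity
  have hd2 : (0:ℝ) < S + a ^ m := by positivity
  constructor
  · rintro ⟨h1, h2⟩
    constructor
    · rw [div_lt_iff₀ hd1]
      nlinarith [mul_pos h1 hc]
    · rw [lt_div_iff₀ hd2]
      nlinarith [mul_lt_mul_of_pos_right h2 hc]
  · rintro ⟨h1, h2⟩
    rw [div_lt_iff₀ hd1] at h1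
    rw [lt_div_iff₀ hd2] at h2
    constructor
    · have h3 : 0 * a ^ m < μbar * a ^ m := by rw [zero_mul, hμbar']; nlinarith
      exact (mul_lt_mul_iff_of_pos_right hc).mp h3
    · have h3 : μbar * a ^ m < μ * b * a ^ m := by rw [hμbar']; nlinarith
      exact (mul_lt_mul_iff_of_pos_right hc).mp h3
end

section
/- Let 0 < a < 1, 0 < b < 1, n ≥ 2. The interval P_{L^nRL^{n-1}R} lies inside the molecular region: a^(n-1)/(a^(n-1)b + ∑_{i=0}^{n-1}a^i) ≤ (a^(2n-1)b + a^(n-1))/(a^(2n-1)b + (a^(n-1)b+1)·∑_{i=0}^{n-1}a^i) and (a^(2n-2)b + a^(n-1))/(a^(2n-2)b² + (a^(n-1)b+1)·∑_{i=0}^{n-1}a^i) ≤ a^(n-1)/∑_{i=0}^{n-1}a^i. -/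
theorem stmt_18 (a b : ℝ) (ha0 : 0 < a) (ha1 : a < 1) (hb0 : 0 < b) (hb1 : b < 1)
    (n : ℕ) (hn : 2 ≤ n) :
    a ^ (n - 1) / (a ^ (n - 1) * b + ∑ i ∈ Finset.range n, a ^ i) ≤
        (a ^ (2 * n - 1) * b + a ^ (n - 1)) /
          (a ^ (2 * n - 1) * b + (a ^ (n - 1) * b + 1) * ∑ i ∈ Finset.range n, a ^ i) ∧
      (a ^ (2 * n - 2) * b + a ^ (n - 1)) /
          (a ^ (2 * n - 2) * b ^ 2 + (a ^ (n - 1) * b + 1) * ∑ i ∈ Finset.range n, a ^ i) ≤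
        a ^ (n - 1) / (∑ i ∈ Finset.range n, a ^ i) := by
  set S : ℝ := ∑ i ∈ Finset.range n, a ^ i with hSdef
  have hS : 0 < S := by
    apply Finset.sum_pos (fun i _ => pow_pos ha0 i)
    exact ⟨0, Finset.mem_range.mpr (by omega)⟩
  have hgs : S * (a - 1) = a ^ n - 1 := geom_sum_mul a n
  have hqa : a ^ n = a * a ^ (n - 1) := by
    rw [← pow_succ']; congr 1; omega
  have e1 : a ^ (2 * n - 1) = a * (a ^ (n - 1) * a ^ (n - 1)) := by
    rw [show 2 * n - 1 = 1 + ((n - 1) + (n - 1)) by omega, pow_add, pow_add, pow_one]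
  have e2 : a ^ (2 * n - 2) = a ^ (n - 1) * a ^ (n - 1) := by
    rw [show 2 * n - 2 = (n - 1) + (n - 1) by omega, pow_add]
  have hkey : a * S = S - 1 + a * a ^ (n - 1) := by rw [← hqa]; linarith [hgs]
  rw [e1, e2]
  have hp : 0 < a ^ (n - 1) := pow_pos ha0 _
  generalize a ^ (n - 1) = p at *
  have hk2 : a * S * (p * p * b) = (S - 1 + a * p) * (p * p * b) := by rw [hkey]
  have d1 : (0:ℝ) < p * b * S := mul_pos (mul_pos hp hb0) hS
  have d2 : (0:ℝ) < a * (p * p) * b := mul_pos (mul_pos ha0 (mul_pos hp hp)) hb0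
  have d3 : (0:ℝ) < p * p * (b * b) := mul_pos (mul_pos hp hp) (mul_pos hb0 hb0)
  constructor
  · rw [div_le_div_iff₀ (by nlinarith) (by nlinarith)]
    nlinarith [mul_pos (mul_pos ha0 (mul_pos hp (mul_pos hp hp))) (mul_pos hb0 hb0), mul_pos (mul_pos ha0 (mul_pos hp (mul_pos hp hp))) hb0, hk2]
  · rw [div_le_div_iff₀ (by nlinarith) hS]
    nlinarith [mul_pos (mul_pos hp (mul_pos hp hp)) (mul_pos hb0 hb0)]
end
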